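/- Let C be a permutation class and let 𝓜 be its canonical m-basis. The minimal m-bases of C are exactly the subsets B of 𝓜 that are minimal for inclusion subject to C = Av_S(B). -/
import Mathlib


/-- A binary matrix: entries in `Bool`, rows indexed bottom-to-top by `Fin m`. -/
structure BMat where
  m : ℕ
  n : ℕ
  entry : Fin m → Fin n → Bool

/-- Submatrix order: `A` is obtained from `B` by deleting rows and columns. -/
def BMat.Sub (A B : BMat) : Prop :=
  ∃ (f : Fin A.m → Fin B.m) (g : Fin A.n → Fin B.n),
    StrictMono f ∧ StrictMono g ∧ ∀ i j, A.entry i j = B.entry (f i) (g j)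

/-- A permutation of arbitrary size. -/
abbrev Perm' := Σ n : ℕ, Equiv.Perm (Fin n)

/-- `PPat π σ` : `π` is a (classical) pattern of `σ`. -/
def PPat (π σ : Perm') : Prop :=
  ∃ f : Fin π.1 → Fin σ.1, StrictMono f ∧
    ∀ a b, π.2 a < π.2 b ↔ σ.2 (f a) < σ.2 (f b)

/-- The permutation matrix of `σ` : `M_σ(i,j) = 1` iff `i = σ(j)`. -/
def permMat (σ : Perm') : BMat :=
  ⟨σ.1, σ.1, fun i j => decide (i = σ.2 j)⟩

/-- A quasi-permutation matrix: at most one `1` in each row and each column. -/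
def QuasiPerm (M : BMat) : Prop :=
  (∀ i j j', M.entry i j = true → M.entry i j' = true → j = j') ∧
  (∀ i i' j, M.entry i j = true → M.entry i' j = true → i = i')

/-- The set of permutations whose permutation matrix avoids every matrix in `Ms`. -/
def AvS (Ms : Set BMat) : Set Perm' :=
  {σ | ∀ M ∈ Ms, ¬ BMat.Sub M (permMat σ)}

/-- An m-basis of `C`: an antichain of matrices whose avoidance characterizes `C`. -/
def IsMBasis (C : Set Perm') (Ms : Set BMat) : Prop :=
  IsAntichain BMat.Sub Ms ∧ C = AvS Ms

/-- A minimal m-basis of `C`. -/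
def IsMinimalMBasis (C : Set Perm') (Ms : Set BMat) : Prop :=
  IsMBasis C Ms ∧
  (∀ Ms' : Set BMat, Ms' ⊂ Ms → C ≠ AvS Ms') ∧
  (∀ M ∈ Ms, ∀ M' : BMat, BMat.Sub M' M →
    M' = M ∨ C ≠ AvS ((Ms \ {M}) ∪ {M'}))

/-- The canonical m-basis of `C`: the minimal quasi-permutation matrices which occur
as a submatrix of no permutation matrix of an element of `C`. -/
def CanonMBasis (C : Set Perm') : Set BMat :=
  {M | QuasiPerm M ∧ (¬ ∃ σ ∈ C, BMat.Sub M (permMat σ)) ∧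
    ∀ M' : BMat, QuasiPerm M' → (¬ ∃ σ ∈ C, BMat.Sub M' (permMat σ)) →
      BMat.Sub M' M → M' = M}

lemma BMat.Sub.trans {A B C : BMat} (h1 : A.Sub B) (h2 : B.Sub C) : A.Sub C := by
  obtain ⟨f, g, hf, hg, he⟩ := h1
  obtain ⟨f', g', hf', hg', he'⟩ := h2
  exact ⟨f' ∘ f, g' ∘ g, hf'.comp hf, hg'.comp hg,
    fun i j => by simp [he i j, he' (f i) (g j)]⟩

lemma quasiPerm_permMat (σ : Perm') : QuasiPerm (permMat σ) := by
  constructor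
  · intro i j j' h h'
    simp only [permMat, decide_eq_true_eq] at h h'
    exact σ.2.injective (h.symm.trans h')
  · intro i i' j h h'
    simp only [permMat, decide_eq_true_eq] at h h'
    rw [h, h']

lemma quasiPerm_of_sub {A B : BMat} (h : A.Sub B) (hB : QuasiPerm B) : QuasiPerm A := by
  obtain ⟨f, g, hf, hg, he⟩ := h
  constructor
  · intro i j j' h1 h2
    rw [he i j] at h1; rw [he i j'] at h2
    exact hg.injective (hB.1 (f i) _ _ h1 h2)
  · intro i i' j h1 h2
    rw [he i j] at h1; rw [he i' j] at h2
    exact hf.injective (hB.2 _ _ (g j) h1 h2)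

theorem stmt_7 (C : Set Perm') (hC : ∀ σ ∈ C, ∀ π, PPat π σ → π ∈ C)
    (Ms : Set BMat) :
    IsMinimalMBasis C Ms ↔
      (Ms ⊆ CanonMBasis C ∧ C = AvS Ms ∧
        ∀ Ms' : Set BMat, Ms' ⊆ Ms → C = AvS Ms' → Ms' = Ms) := by
  constructor
  · rintro ⟨⟨hac, hC1⟩, hmin2, hmin3⟩
    refine ⟨?_, hC1, ?_⟩
    · intro M hM
      have hnoc : ¬ ∃ σ ∈ C, BMat.Sub M (permMat σ) := by
        rintro ⟨σ, hσ, hsub⟩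
        rw [hC1] at hσ
        exact hσ M hM hsub
      have hq : QuasiPerm M := by
        by_contra hnq
        apply hmin2 (Ms \ {M}) (Set.sdiff_singleton_ssubset.mpr hM)
        rw [hC1]
        ext σ
        constructor
        · intro h N hN; exact h N hN.1
        · intro h N hN
          by_cases hNM : N = M
          · subst hNM
            intro hsub
            exact hnq (quasiPerm_of_sub hsub (quasiPerm_permMat σ))
          · exact h N ⟨hN, hNM⟩
      refine ⟨hq, hnoc, ?_⟩
      intro M' hq' hnoc' hsub
      rcases hmin3 M hM M' hsub with h | h
      · exact h
      · exfalso
        apply h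
        rw [hC1]
        ext σ
        constructor
        · intro hσ N hN
          rcases hN with ⟨hN1, _⟩ | hN2
          · exact hσ N hN1
          · rw [Set.mem_singleton_iff] at hN2
            subst hN2
            intro hsub'
            exact hnoc' ⟨σ, by rw [hC1]; exact hσ, hsub'⟩
        · intro hσ N hN
          by_cases hNM : N = M
          · subst hNM
            intro hsubM
            exact hσ M' (Or.inr rfl) (hsub.trans hsubM)
          · exact hσ N (Or.inl ⟨hN, hNM⟩)
    · intro Ms' hsub hC'
      by_contra hne
      exact hmin2 Ms' (ssubset_of_subset_of_ne hsub hne) hC'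
  · rintro ⟨hsubN, hC1, hmin⟩
    refine ⟨⟨?_, hC1⟩, ?_, ?_⟩
    · intro a ha b hb hne hsub
      exact hne ((hsubN hb).2.2 a (hsubN ha).1 (hsubN ha).2.1 hsub)
    · intro Ms' hss hC'
      exact hss.ne (hmin Ms' hss.subset hC')
    · intro M hM M' hsub
      by_cases hMe : M' = M
      · exact Or.inl hMe
      · right
        obtain ⟨hq, hnoc, hminM⟩ := hsubN hM
        have hq' : QuasiPerm M' := quasiPerm_of_sub hsub hq
        have hocc : ∃ σ ∈ C, BMat.Sub M' (permMat σ) := by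
          by_contra hno
          exact hMe (hminM M' hq' hno hsub)
        obtain ⟨σ, hσC, hσs⟩ := hocc
        intro hCeq
        have hmem : σ ∈ AvS ((Ms \ {M}) ∪ {M'}) := hCeq ▸ hσC
        exact hmem M' (Or.inr rfl) hσs
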